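/- arXiv:2005.09125 — 6 statements merged into one kernel-verified Lean document; each statement's English description precedes it below -/
import Mathlib

section
/- If A is a finitely ambiguous NBW (FANBW) and w ∈ L(A), then the accepting run DAG G_{w,A} has a separate level: there exists k ≥ 1 such that every vertex at a level ≥ k lying on an accepting ω-branch of G_{w,A} has exactly one predecessor in G_{w,A}. -/
open Classical

variable {Q : Type} {A : Type}

/-- A nondeterministic Büchi automaton on words (NBW). -/
structure NBW (Q : Type) (A : Type) where
  I : Set Q
  δ : Q → A → Set Q
  F : Set Q

namespace NBW

/-- Transition function extended to sets of states. -/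
def δset (M : NBW Q A) (S : Set Q) (a : A) : Set Q := ⋃ q ∈ S, M.δ q a

/-- A run of `M` on the word `w`. -/
def IsRun (M : NBW Q A) (w : ℕ → A) (ρ : ℕ → Q) : Prop :=
  ρ 0 ∈ M.I ∧ ∀ i, ρ (i + 1) ∈ M.δ (ρ i) (w i)

/-- An accepting run: a run visiting accepting states infinitely often. -/
def IsAccRun (M : NBW Q A) (w : ℕ → A) (ρ : ℕ → Q) : Prop :=
  M.IsRun w ρ ∧ ∀ n, ∃ m ≥ n, ρ m ∈ M.F

/-- `M` accepts the word `w`. -/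
def Accepts (M : NBW Q A) (w : ℕ → A) : Prop := ∃ ρ, M.IsAccRun w ρ

/-- `M` is finitely ambiguous (an FANBW): each word has finitely many accepting runs. -/
def FA (M : NBW Q A) : Prop := ∀ w : ℕ → A, {ρ | M.IsAccRun w ρ}.Finite

/-- Completeness of the transition function. -/
def Complete (M : NBW Q A) : Prop := ∀ (q : Q) (a : A), (M.δ q a).Nonempty

/-- Reverse determinism: each state has at most one `a`-predecessor. -/
def ReverseDet (M : NBW Q A) : Prop :=
  ∀ (q' : Q) (a : A), {q | q' ∈ M.δ q a}.Subsingleton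

/-- The set of states at level `l` of the run DAG `G_{w,M}`. -/
def V (M : NBW Q A) (w : ℕ → A) : ℕ → Set Q
  | 0 => M.I
  | l + 1 => M.δset (V M w l) (w l)

/-- Edge of the run DAG `G_{w,M}` from `⟨q,l⟩` to `⟨q',l+1⟩`. -/
def Edge (M : NBW Q A) (w : ℕ → A) (l : ℕ) (q q' : Q) : Prop :=
  q ∈ M.V w l ∧ q' ∈ M.δ q (w l)

/-- An ω-branch of the run DAG `G_{w,M}` (identified with its sequence of states). -/
def IsBranch (M : NBW Q A) (w : ℕ → A) (b : ℕ → Q) : Prop :=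
  b 0 ∈ M.I ∧ ∀ l, M.Edge w l (b l) (b (l + 1))

/-- Edge of the co-deterministic run DAG `G^e_{w,M}`: only the edge from the
minimal-index predecessor (w.r.t. the linear order enumerating `Q`) is kept. -/
def EdgeE [LinearOrder Q] (M : NBW Q A) (w : ℕ → A) (l : ℕ) (q q' : Q) : Prop :=
  IsLeast {p | p ∈ M.V w l ∧ q' ∈ M.δ p (w l)} q

/-- An ω-branch of the co-deterministic run DAG `G^e_{w,M}`. -/
def IsBranchE [LinearOrder Q] (M : NBW Q A) (w : ℕ → A) (b : ℕ → Q) : Prop :=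
  b 0 ∈ M.I ∧ ∀ l, M.EdgeE w l (b l) (b (l + 1))

/-- A branch of `G^e_{w,M}` starting from vertex `⟨q,l⟩`. -/
def BranchFromE [LinearOrder Q] (M : NBW Q A) (w : ℕ → A) (l : ℕ) (q : Q) (b : ℕ → Q) : Prop :=
  b 0 = q ∧ q ∈ M.V w l ∧ ∀ i, M.EdgeE w (l + i) (b i) (b (i + 1))

/-- The vertex `⟨q,l⟩` of `G^e_{w,M}` is finite: no infinite branch starts from it. -/
def FiniteVertexE [LinearOrder Q] (M : NBW Q A) (w : ℕ → A) (l : ℕ) (q : Q) : Prop :=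
  ¬ ∃ b, M.BranchFromE w l q b

/-- The minimal set of predecessors `S_min` of `δ(S,b)` within `S`. -/
def Smin [LinearOrder Q] (M : NBW Q A) (S : Set Q) (b : A) : Set Q :=
  {q | ∃ q' ∈ M.δset S b, IsLeast {p | p ∈ S ∧ q' ∈ M.δ p b} q}

/-- The reduced transition function `δ^e` for the level with state set `S` and letter `b`. -/
def δe [LinearOrder Q] (M : NBW Q A) (S : Set Q) (b : A) (S₁ : Set Q) : Set Q :=
  M.δset (S₁ ∩ M.Smin S b) b

/-- The reduced transition function at level `ℓ` of `G^e_{w,M}`. -/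
def δeAt [LinearOrder Q] (M : NBW Q A) (w : ℕ → A) (ℓ : ℕ) (S₁ : Set Q) : Set Q :=
  M.δe (M.V w ℓ) (w ℓ) S₁

end NBW

section DAG

variable (E : ℕ → Q → Q → Prop) (U : Set (Q × ℕ))

/-- An infinite branch from vertex `v` staying inside the vertex set `U`,
following the edge relation `E`. -/
def DagBranchIn (v : Q × ℕ) (b : ℕ → Q) : Prop :=
  b 0 = v.1 ∧ (∀ i, (b i, v.2 + i) ∈ U) ∧ ∀ i, E (v.2 + i) (b i) (b (i + 1))

/-- Vertex `v` is finite in the sub-DAG `U`: no infinite branch from `v` inside `U`. -/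
def DagFiniteIn (v : Q × ℕ) : Prop := ¬ ∃ b, DagBranchIn E U v b

/-- One-step reachability inside `U`. -/
def DagStep (v v' : Q × ℕ) : Prop :=
  v ∈ U ∧ v' ∈ U ∧ v'.2 = v.2 + 1 ∧ E v.2 v.1 v'.1

/-- Vertex `v` is F-free in `U`: not finite, and no F-vertex reachable from it in `U`. -/
def DagFFreeIn (F : Set Q) (v : Q × ℕ) : Prop :=
  ¬ DagFiniteIn E U v ∧ ∀ v', Relation.ReflTransGen (DagStep E U) v v' → v'.1 ∉ F

/-- The rank-stripping sequence of sub-DAGs: `G⁰ = G0`; `G^{2i+1}` removes the finite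
vertices of `G^{2i}`; `G^{2i+2}` removes the F-free vertices of `G^{2i+1}`. -/
def DagStrip (F : Set Q) (G0 : Set (Q × ℕ)) : ℕ → Set (Q × ℕ)
  | 0 => G0
  | i + 1 =>
      let U' := DagStrip F G0 i
      if i % 2 = 0 then U' \ {v | DagFiniteIn E U' v}
      else U' \ {v | DagFFreeIn E U' F v}

end DAG

namespace NBW

/-- The vertex set of the run DAG `G_{w,M}` (also of `G^e_{w,M}`). -/
def DagVertices (M : NBW Q A) (w : ℕ → A) : Set (Q × ℕ) := {v | v.1 ∈ M.V w v.2}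

/-- Level rankings with maximum rank 2: `none` plays the role of `⊥`. -/
def IsLR (M : NBW Q A) (f : Q → Option (Fin 3)) : Prop :=
  ∀ q r, f q = some r → q ∈ M.F → (r : ℕ) % 2 = 0

/-- Domain of a level ranking. -/
def rankDom (f : Q → Option (Fin 3)) : Set Q := {q | (f q).isSome}

/-- Coverage relation `f' ⪯^{δ^e}_a f` for level rankings. -/
def Covers [LinearOrder Q] (M : NBW Q A) (a : A) (f f' : Q → Option (Fin 3)) : Prop :=
  (∀ q r q', f q = some r → q' ∈ M.δe (rankDom f) a {q} →
    ∃ r', f' q' = some r' ∧ r' ≤ r) ∧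
  (∀ q', (∀ q, q' ∈ M.δe (rankDom f) a {q} → f q = none) → f' q' = none)

/-- The rank-based complement of an FANBW, with maximum rank 2 and the reduced
transition function `δ^e`. -/
noncomputable def rankComplement [LinearOrder Q] (M : NBW Q A) :
    NBW ((Q → Option (Fin 3)) × Set Q) A where
  I := {s | s.2 = ∅ ∧ ∀ q, s.1 q = if q ∈ M.I then some 2 else none}
  δ := fun s a =>
    {s' | M.Covers a s.1 s'.1 ∧ M.IsLR s'.1 ∧
      ((s.2 ≠ ∅ ∧
          s'.2 = M.δe (rankDom s.1) a s.2 \ {q | ∃ r, s'.1 q = some r ∧ (r : ℕ) % 2 = 1}) ∨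
       (s.2 = ∅ ∧ s'.2 = {q | ∃ r, s'.1 q = some r ∧ (r : ℕ) % 2 = 0}))}
  F := {s | s.2 = ∅}

/-- Slice-based DAG `G^s_{w,M}`: the set at position `p` of level `l`.
Level `0` consists of `I \ F` (position 0) and `I ∩ F` (position 1); from the
set at position `j` of level `l`, position `2j` of level `l+1` holds the non-`F`
successors and position `2j+1` the `F`-successors, keeping only the rightmost
occurrence of each state. -/
noncomputable def sliceSet (M : NBW Q A) (w : ℕ → A) : ℕ → ℕ → Set Q
  | 0, p => if p = 0 then M.I \ M.F else if p = 1 then M.I ∩ M.F else ∅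
  | l + 1, p =>
      let S' : ℕ → Set Q := fun q =>
        if q % 2 = 0 then M.δset (sliceSet M w l (q / 2)) (w l) \ M.F
        else M.δset (sliceSet M w l (q / 2)) (w l) ∩ M.F
      S' p \ ⋃ q ∈ Set.Ioi p, S' q

/-- An ω-branch of the slice-based DAG `G^s_{w,M}`, given by the positions it visits. -/
def IsSliceBranch (M : NBW Q A) (w : ℕ → A) (g : ℕ → ℕ) : Prop :=
  (∀ l, M.sliceSet w l (g l) ≠ ∅) ∧ ∀ l, g (l + 1) / 2 = g l

/-- There is an infinite branch of `G^s_{w,M}` starting from position `p` of level `l`. -/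
def SliceBranchFrom (M : NBW Q A) (w : ℕ → A) (l p : ℕ) : Prop :=
  ∃ g : ℕ → ℕ, g 0 = p ∧ (∀ i, M.sliceSet w (l + i) (g i) ≠ ∅) ∧ ∀ i, g (i + 1) / 2 = g i

/-- Accepting-phase transition of the `(N,C,B)` construction. -/
noncomputable def ncbStep [LinearOrder Q] (M : NBW Q A) (a : A)
    (t : Set Q × Set Q × Set Q) : Set Q × Set Q × Set Q :=
  (M.δe t.1 a t.1,
   M.δe t.1 a t.2.1 ∪ (M.δe t.1 a t.1 ∩ M.F),
   if t.2.2 = ∅ then M.δe t.1 a t.2.1 ∪ (M.δe t.1 a t.1 ∩ M.F) else M.δe t.1 a t.2.2)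

/-- The slice-based specialized complement of an FANBW: the `(N,C,B)` construction. -/
noncomputable def ncbComplement [LinearOrder Q] (M : NBW Q A) :
    NBW (Set Q ⊕ Set Q × Set Q × Set Q) A where
  I := {Sum.inl M.I}
  δ := fun s a =>
    match s with
    | Sum.inl S => {Sum.inl (M.δe S a S), Sum.inr (M.ncbStep a (S, S ∩ M.F, S ∩ M.F))}
    | Sum.inr t => {Sum.inr (M.ncbStep a t)}
  F := {s | ∃ t : Set Q × Set Q × Set Q, s = Sum.inr t ∧ t.2.2 = ∅}

/-- Trajectory of the deterministic accepting phase of the `(N,C,B)` construction. -/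
noncomputable def ncbTraj [LinearOrder Q] (M : NBW Q A) (w : ℕ → A)
    (t₀ : Set Q × Set Q × Set Q) : ℕ → Set Q × Set Q × Set Q
  | 0 => t₀
  | i + 1 => M.ncbStep (w i) (ncbTraj M w t₀ i)

end NBW

/-!
If an accepting branch of `G_{w,M}` has two predecessors at level `l + 1`, splicing a path to
the other predecessor into it gives two accepting runs that differ at level `l` and coincide
afterwards. A pair of runs can merge like this at most once, so finitely many accepting runs
merge at only finitely many levels; beyond the last one every predecessor is unique.
-/

def IsMergeLevel {α : Type*} (ρ σ : ℕ → α) (l : ℕ) : Prop :=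
  ρ l ≠ σ l ∧ ∀ m > l, ρ m = σ m

theorem isMergeLevel_subsingleton {α : Type*} (ρ σ : ℕ → α) :
    {l | IsMergeLevel ρ σ l}.Subsingleton := by
  have no_later : ∀ {l l'}, IsMergeLevel ρ σ l → IsMergeLevel ρ σ l' → ¬ l < l' :=
    fun h h' hlt => h'.1 (h.2 _ hlt)
  intro l h l' h'
  exact le_antisymm (not_lt.mp (no_later h' h)) (not_lt.mp (no_later h h'))

theorem finite_setOf_isMergeLevel {α : Type*} {R : Set (ℕ → α)} (hR : R.Finite) :
    {l | ∃ ρ ∈ R, ∃ σ ∈ R, IsMergeLevel ρ σ l}.Finite := by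
  refine (hR.biUnion fun ρ _ => hR.biUnion fun σ _ =>
    (isMergeLevel_subsingleton ρ σ).finite).subset ?_
  rintro l ⟨ρ, hρ, σ, hσ, h⟩
  simp only [Set.mem_iUnion]
  exact ⟨ρ, hρ, σ, hσ, h⟩

namespace NBW

variable {M : NBW Q A} {w : ℕ → A}

theorem exists_run_prefix_of_mem_V {l : ℕ} {q : Q} (hq : q ∈ M.V w l) :
    ∃ ρ : ℕ → Q, ρ 0 ∈ M.I ∧ (∀ i < l, ρ (i + 1) ∈ M.δ (ρ i) (w i)) ∧ ρ l = q := by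
  induction l generalizing q with
  | zero => exact ⟨fun _ => q, hq, fun i h => absurd h (Nat.not_lt_zero i), rfl⟩
  | succ l ih =>
    simp only [V, δset, Set.mem_iUnion] at hq
    obtain ⟨p, hp, hpq⟩ := hq
    obtain ⟨ρ, h0, hstep, hl⟩ := ih hp
    refine ⟨fun m => if m ≤ l then ρ m else q, by simpa using h0, ?_, by simp⟩
    intro i hi
    rcases Nat.lt_succ_iff_lt_or_eq.mp hi with h | rfl
    · simpa [h.le, Nat.succ_le_of_lt h] using hstep i h
    · simpa [hl] using hpq

theorem IsBranch.isAccRun {b : ℕ → Q} (hb : M.IsBranch w b) (hF : ∀ n, ∃ m ≥ n, b m ∈ M.F) :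
    M.IsAccRun w b :=
  ⟨⟨hb.1, fun i => (hb.2 i).2⟩, hF⟩

theorem IsAccRun.exists_splice {ρ : ℕ → Q} {l : ℕ} {q : Q} (hρ : M.IsAccRun w ρ)
    (hq : M.Edge w l q (ρ (l + 1))) :
    ∃ σ : ℕ → Q, M.IsAccRun w σ ∧ σ l = q ∧ ∀ m > l, σ m = ρ m := by
  obtain ⟨π, h0, hstep, hl⟩ := exists_run_prefix_of_mem_V hq.1
  refine ⟨fun m => if m ≤ l then π m else ρ m, ⟨⟨by simpa using h0, ?_⟩, ?_⟩,
    by simpa using hl, fun m hm => by simp [Nat.not_le.mpr hm]⟩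
  · intro i
    rcases lt_trichotomy i l with h | rfl | h
    · simpa [h.le, Nat.succ_le_of_lt h] using hstep i h
    · simpa [hl] using hq.2
    · simpa [Nat.not_le.mpr h, Nat.not_le.mpr (Nat.lt_succ_of_lt h)] using hρ.1.2 i
  · intro n
    obtain ⟨m, hm, hmF⟩ := hρ.2 (max n (l + 1))
    refine ⟨m, le_of_max_le_left hm, ?_⟩
    simpa [Nat.not_le.mpr (le_of_max_le_right hm)] using hmF

theorem exists_isMergeLevel_of_not_existsUnique_edge {b : ℕ → Q} (hb : M.IsBranch w b)
    (hF : ∀ n, ∃ m ≥ n, b m ∈ M.F) {l : ℕ} (hl : ¬ ∃! q, M.Edge w l q (b (l + 1))) :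
    ∃ σ ∈ {ρ | M.IsAccRun w ρ}, ∃ ρ ∈ {ρ | M.IsAccRun w ρ}, IsMergeLevel σ ρ l := by
  obtain ⟨q, hq, hqb⟩ : ∃ q, M.Edge w l q (b (l + 1)) ∧ q ≠ b l := by
    by_contra! h
    exact hl ⟨b l, hb.2 l, h⟩
  obtain ⟨σ, hσ, hσl, hσb⟩ := (hb.isAccRun hF).exists_splice hq
  exact ⟨σ, hσ, b, hb.isAccRun hF, hσl ▸ hqb, hσb⟩

end NBW

theorem separate_level_of_FA_general
    (M : NBW Q A) (hFA : M.FA) (w : ℕ → A) :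
    ∃ k ≥ 1, ∀ b : ℕ → Q, M.IsBranch w b → (∀ n, ∃ m ≥ n, b m ∈ M.F) →
      ∀ l : ℕ, k ≤ l + 1 → ∃! q : Q, M.Edge w l q (b (l + 1)) := by
  obtain ⟨N, hN⟩ := (finite_setOf_isMergeLevel (hFA w)).bddAbove
  refine ⟨N + 2, by omega, fun b hb hF l hl => by_contra fun hnu => ?_⟩
  have := hN (NBW.exists_isMergeLevel_of_not_existsUnique_edge hb hF hnu)
  omega

/-- separate levels of accepting DAGs of FANBWs: if `M` is an FANBW and
`w ∈ L(M)`, there is a level `k ≥ 1` such that every vertex at level `≥ k` lying on an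
accepting ω-branch of `G_{w,M}` has exactly one predecessor in `G_{w,M}`. -/
theorem separate_level_of_FA
    [Fintype Q] (M : NBW Q A) (hFA : M.FA) (w : ℕ → A) (hw : M.Accepts w) :
    ∃ k ≥ 1, ∀ b : ℕ → Q, M.IsBranch w b → (∀ n, ∃ m ≥ n, b m ∈ M.F) →
      ∀ l : ℕ, k ≤ l + 1 → ∃! q : Q, M.Edge w l q (b (l + 1)) :=
  separate_level_of_FA_general M hFA w
end

section
/- Let A be an FANBW with states Q = {s₁,…,sₙ}, and let G^e_{w,A} be the co-deterministic run DAG obtained from G_{w,A} by keeping, for each vertex with multiple incoming edges, only the edge from the predecessor with minimal index. Then w is accepted by A if and only if G^e_{w,A} contains an accepting ω-branch. -/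
open Classical

variable {Q : Type} {A : Type}

/-!
Tracing minimal-index predecessors back from `⟨ρ m, m⟩`, where `ρ` is an accepting run, and
then continuing along `ρ` yields an accepting run that follows `G^e` up to level `m`. By finite
ambiguity these runs, one for each `m`, take only finitely many values, so one of them is chosen
for arbitrarily large `m` and hence follows `G^e` at every level. Conversely every branch of
`G^e` is a run.
-/

theorem exists_forall_of_finite_range {α : Type*} {σ : ℕ → α} (hσ : (Set.range σ).Finite)
    {R : ℕ → α → Prop} (hR : ∀ m, ∀ l < m, R l (σ m)) : ∃ m, ∀ l, R l (σ m) := by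
  have : Finite (Set.range σ) := hσ.to_subtype
  obtain ⟨⟨_, m, rfl⟩, hfiber⟩ := Finite.exists_infinite_fiber (Set.rangeFactorization σ)
  refine ⟨m, fun l => ?_⟩
  obtain ⟨k, hk, hlk⟩ := (Set.infinite_coe_iff.mp hfiber).exists_gt l
  have hσk : σ k = σ m := congrArg Subtype.val hk
  exact hσk ▸ hR k l hlk

namespace NBW

variable {M : NBW Q A} {w : ℕ → A}

theorem IsRun.mem_V {ρ : ℕ → Q} (hρ : M.IsRun w ρ) (m : ℕ) : ρ m ∈ M.V w m := by
  induction m with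
  | zero => exact hρ.1
  | succ m ih => exact Set.mem_biUnion ih (hρ.2 m)

theorem IsBranchE.isRun [LinearOrder Q] {b : ℕ → Q} (hb : M.IsBranchE w b) : M.IsRun w b :=
  ⟨hb.1, fun l => (hb.2 l).1.2⟩

theorem IsAccRun.splice {ρ b : ℕ → Q} {m : ℕ} (hρ : M.IsAccRun w ρ) (hb0 : b 0 ∈ M.I)
    (hb : ∀ l < m, b (l + 1) ∈ M.δ (b l) (w l)) (hbm : b m = ρ m) :
    M.IsAccRun w (fun k => if k ≤ m then b k else ρ k) := by
  refine ⟨⟨by simpa using hb0, fun k => ?_⟩, fun n => ?_⟩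
  · rcases lt_trichotomy k m with hkm | rfl | hmk
    · simpa [hkm.le, Nat.succ_le_of_lt hkm] using hb k hkm
    · simpa [hbm] using hρ.1.2 k
    · simpa [hmk.not_ge, (hmk.trans k.lt_succ_self).not_ge] using hρ.1.2 k
  · obtain ⟨k, hk, hkF⟩ := hρ.2 (max n (m + 1))
    exact ⟨k, le_of_max_le_left hk, by simpa [show ¬k ≤ m by omega] using hkF⟩

theorem exists_edgeE_of_mem_V [Finite Q] [LinearOrder Q] {l : ℕ} {q : Q}
    (hq : q ∈ M.V w (l + 1)) : ∃ p, M.EdgeE w l p q := by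
  obtain ⟨p, hp, hpq⟩ := Set.mem_iUnion₂.mp hq
  obtain ⟨p₀, hp₀⟩ := (Set.toFinite {p | p ∈ M.V w l ∧ q ∈ M.δ p (w l)}).exists_minimal
    ⟨p, hp, hpq⟩
  exact ⟨p₀, minimal_iff_isLeast.mp hp₀⟩

theorem exists_edgeE_path [Finite Q] [LinearOrder Q] {m : ℕ} {q : Q} (hq : q ∈ M.V w m) :
    ∃ b : ℕ → Q, b 0 ∈ M.I ∧ b m = q ∧ ∀ l < m, M.EdgeE w l (b l) (b (l + 1)) := by
  induction m generalizing q with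
  | zero => exact ⟨fun _ => q, hq, rfl, fun _ h => absurd h (Nat.not_lt_zero _)⟩
  | succ m ih =>
    obtain ⟨p, hpq⟩ := exists_edgeE_of_mem_V hq
    obtain ⟨b, hb0, hbm, hb⟩ := ih hpq.1.1
    refine ⟨Function.update b (m + 1) q, by simpa using hb0, by simp, fun l hl => ?_⟩
    rcases Nat.lt_succ_iff_lt_or_eq.mp hl with hlm | rfl
    · rw [Function.update_of_ne (by omega), Function.update_of_ne (by omega)]
      exact hb l hlm
    · simpa [hbm] using hpq

theorem exists_accRun_edgeE_lt [Finite Q] [LinearOrder Q] (hacc : M.Accepts w) (m : ℕ) :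
    ∃ σ, M.IsAccRun w σ ∧ ∀ l < m, M.EdgeE w l (σ l) (σ (l + 1)) := by
  obtain ⟨ρ, hρ⟩ := hacc
  obtain ⟨b, hb0, hbm, hb⟩ := exists_edgeE_path (hρ.1.mem_V m)
  refine ⟨_, hρ.splice hb0 (fun l hl => (hb l hl).1.2) hbm, fun l hl => ?_⟩
  simpa [hl.le, Nat.succ_le_of_lt hl] using hb l hl

end NBW

/-- acceptance of co-deterministic DAGs: for an FANBW `M`, a word `w` is
accepted by `M` iff the co-deterministic run DAG `G^e_{w,M}` (keeping only the edge from
the minimal-index predecessor) contains an accepting ω-branch. -/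
theorem accepts_iff_codet_dag_accepting
    [Fintype Q] [LinearOrder Q] (M : NBW Q A) (hFA : M.FA) (w : ℕ → A) :
    M.Accepts w ↔ ∃ b, M.IsBranchE w b ∧ ∀ n, ∃ m ≥ n, b m ∈ M.F := by
  constructor
  · intro hacc
    choose σ hσacc hσedge using NBW.exists_accRun_edgeE_lt hacc
    have hrange : (Set.range σ).Finite := (hFA w).subset (Set.range_subset_iff.mpr hσacc)
    obtain ⟨m, hm⟩ := exists_forall_of_finite_range hrange
      (R := fun l τ => M.EdgeE w l (τ l) (τ (l + 1))) hσedge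
    exact ⟨σ m, ⟨(hσacc m).1.1, hm⟩, (hσacc m).2⟩
  · rintro ⟨b, hb, hbF⟩
    exact ⟨b, hb.isRun, hbF⟩
end

section
/- In the co-deterministic run DAG G^e_{w,A} of an NBW A with n states, every vertex has at most one predecessor, and consequently the number of ω-branches of G^e_{w,A} is at most n. -/
open Classical

variable {Q : Type} {A : Type}

/-!
Since every vertex of `G^e_{w,M}` keeps only its edge from the least predecessor, two ω-branches
that meet at some level agree at all earlier levels. So branches that differ once differ forever
after, and finitely many distinct branches are pairwise distinct at a common late level `L`:
evaluation at `L` embeds them into `Q`.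
-/

section BackwardAgreement

open Filter

variable {α : Type*}

theorem eventually_ne_of_agree_pred {b b' : ℕ → α}
    (hpred : ∀ m, b (m + 1) = b' (m + 1) → b m = b' m) (hne : b ≠ b') :
    ∀ᶠ L in atTop, b L ≠ b' L := by
  obtain ⟨l, hl⟩ := Function.ne_iff.mp hne
  filter_upwards [eventually_ge_atTop l] with L hL hEq
  refine hl ?_
  induction L, hL using Nat.le_induction with
  | base => exact hEq
  | succ L _ ih => exact ih (hpred L hEq)

theorem Set.Finite.exists_injOn_eval_of_agree_pred {S : Set (ℕ → α)} (hS : S.Finite)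
    (hpred : ∀ b ∈ S, ∀ b' ∈ S, ∀ m, b (m + 1) = b' (m + 1) → b m = b' m) :
    ∃ L, S.InjOn (fun b => b L) := by
  have hsep : ∀ᶠ L in atTop, ∀ p ∈ S.offDiag, p.1 L ≠ p.2 L :=
    hS.offDiag.eventually_all.2 fun p hp =>
      eventually_ne_of_agree_pred (hpred _ hp.1 _ hp.2.1) hp.2.2
  obtain ⟨L, hL⟩ := hsep.exists
  exact ⟨L, fun b hb b' hb' hEq => by_contra fun hne => hL (b, b') ⟨hb, hb', hne⟩ hEq⟩

theorem Set.finite_and_ncard_le_of_agree_pred [Fintype α] {S : Set (ℕ → α)}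
    (hpred : ∀ b ∈ S, ∀ b' ∈ S, ∀ m, b (m + 1) = b' (m + 1) → b m = b' m) :
    S.Finite ∧ S.ncard ≤ Fintype.card α := by
  refine Set.encard_le_coe_iff_finite_ncard_le.mp (by_contra fun hlt => ?_)
  obtain ⟨T, hTS, hT⟩ := Set.exists_subset_encard_eq (Order.add_one_le_of_lt (not_le.mp hlt))
  obtain ⟨L, hL⟩ := (Set.finite_of_encard_eq_coe hT).exists_injOn_eval_of_agree_pred
    fun b hb b' hb' => hpred b (hTS hb) b' (hTS hb')
  have hle : T.encard ≤ Fintype.card α :=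
    calc T.encard = ((fun b => b L) '' T).encard := hL.encard_image.symm
      _ ≤ (Set.univ : Set α).encard := Set.encard_le_encard (Set.subset_univ _)
      _ = Fintype.card α := by simp
  rw [hT] at hle
  norm_cast at hle
  omega

end BackwardAgreement

namespace NBW

theorem edgeE_pred_subsingleton [LinearOrder Q] (M : NBW Q A) (w : ℕ → A) (l : ℕ) (q' : Q) :
    {q | M.EdgeE w l q q'}.Subsingleton :=
  fun _ hq _ hp => hq.unique hp

theorem IsBranchE.eq_of_succ_eq [LinearOrder Q] {M : NBW Q A} {w : ℕ → A} {b b' : ℕ → Q}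
    (hb : M.IsBranchE w b) (hb' : M.IsBranchE w b') {m : ℕ} (hEq : b (m + 1) = b' (m + 1)) :
    b m = b' m :=
  (hb.2 m).unique (hEq ▸ hb'.2 m)

end NBW

/-- in the co-deterministic run DAG `G^e_{w,M}` every vertex has at most
one predecessor, and consequently the number of ω-branches of `G^e_{w,M}` is at most
`n = |Q|`. -/
theorem codet_dag_unique_pred_and_branch_bound
    [Fintype Q] [LinearOrder Q] (M : NBW Q A) (w : ℕ → A) :
    (∀ (l : ℕ) (q' : Q), {q | M.EdgeE w l q q'}.Subsingleton) ∧
    {b : ℕ → Q | M.IsBranchE w b}.Finite ∧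
    {b : ℕ → Q | M.IsBranchE w b}.ncard ≤ Fintype.card Q :=
  ⟨M.edgeE_pred_subsingleton w, Set.finite_and_ncard_le_of_agree_pred
    fun _ hb _ hb' _ hEq => NBW.IsBranchE.eq_of_succ_eq hb hb' hEq⟩
end

section
/- For an NBW A, A rejects a word w if and only if the unique ranking function f on G_{w,A} — assigning rank 2i to vertices finite in G^{2i} and rank 2i+1 to F-free vertices of G^{2i+1}, where G⁰ = G_{w,A}, G^{2i+1} removes finite vertices of G^{2i} and G^{2i+2} removes F-free vertices of G^{2i+1} — has maximum rank at most 2n (n = |Q|) with G^{2n+1} empty, and every ω-branch of G_{w,A} eventually gets trapped in odd ranks. -/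
open Classical

variable {Q : Type} {A : Type}

/-!
If `M` rejects `w`, every nonempty odd stage `G^{2i+1}` has an `F`-free vertex: otherwise, since
all its vertices are live and can reach `F`, always stepping towards a nearest reachable
`F`-vertex yields a branch through `F` infinitely often, i.e. an accepting run. The branch of
such an `F`-free vertex consists of `F`-free vertices, all removed in `G^{2i+2}`, so the levels of
`G^{2i+2}` are eventually smaller than those of `G^{2i}`. After `n = |Q|` rounds the levels of
`G^{2n}` are eventually empty, every vertex of it is finite, and `G^{2n+1} = ∅`.

Each stage is closed under predecessors, so a branch that leaves a stage never re-enters it.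
The first stage a branch leaves is not `G^{2i+1}`, as the branch itself shows that its vertices are
not finite in `G^{2i}`; hence it is some `G^{2i+2}`, and from then on the branch runs through
`F`-free vertices of `G^{2i+1}`. Conversely an accepting run meets `F` infinitely often, so it is
never eventually `F`-free.
-/

open Relation

theorem exists_seq_frequently_of_variant {α : Type*} {R : α → α → Prop} {P : α → Prop}
    {S : Set α} (d : α → ℕ) (hstep : ∀ a ∈ S, ∃ b ∈ S, R a b ∧ (¬ P a → d b < d a))
    {a : α} (ha : a ∈ S) :
    ∃ f : ℕ → α, f 0 = a ∧ (∀ n, R (f n) (f (n + 1))) ∧ ∀ N, ∃ n ≥ N, P (f n) := by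
  choose! g hgS hgR hgd using hstep
  have hS : ∀ n, g^[n] a ∈ S := by
    intro n
    induction n with
    | zero => exact ha
    | succ n ih => rw [Function.iterate_succ_apply']; exact hgS _ ih
  have hit : ∀ N, ∃ n ≥ N, P (g^[n] a) := by
    intro N
    induction hd : d (g^[N] a) using Nat.strong_induction_on generalizing N with
    | _ m ih =>
      by_cases hP : P (g^[N] a)
      · exact ⟨N, le_rfl, hP⟩
      · have hlt : d (g^[N + 1] a) < m := by
          rw [Function.iterate_succ_apply', ← hd]
          exact hgd _ (hS N) hP
        obtain ⟨n, hn, hPn⟩ := ih _ hlt (N + 1) rfl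
        exact ⟨n, by omega, hPn⟩
  refine ⟨fun n => g^[n] a, rfl, fun n => ?_, hit⟩
  show R (g^[n] a) (g^[n + 1] a)
  rw [Function.iterate_succ_apply']
  exact hgR _ (hS n)

section DagBranch

variable {E : ℕ → Q → Q → Prop} {U U' : Set (Q × ℕ)} {F : Set Q} {v v' : Q × ℕ} {b : ℕ → Q}

theorem DagBranchIn.mono (hb : DagBranchIn E U v b) (h : U ⊆ U') : DagBranchIn E U' v b :=
  ⟨hb.1, fun i => h (hb.2.1 i), hb.2.2⟩

theorem DagBranchIn.drop (hb : DagBranchIn E U v b) (j : ℕ) :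
    DagBranchIn E U (b j, v.2 + j) (fun t => b (j + t)) :=
  ⟨rfl, fun t => by simpa [add_assoc] using hb.2.1 (j + t),
    fun t => by simpa [add_assoc] using hb.2.2 (j + t)⟩

theorem DagBranchIn.reflTransGen (hb : DagBranchIn E U v b) (t : ℕ) :
    ReflTransGen (DagStep E U) v (b t, v.2 + t) := by
  induction t with
  | zero => rw [add_zero, hb.1]
  | succ t ih => exact ih.tail ⟨hb.2.1 t, hb.2.1 (t + 1), by simp [add_assoc], hb.2.2 t⟩

theorem DagBranchIn.of_dagStep {f : ℕ → Q × ℕ} (h : ∀ n, DagStep E U (f n) (f (n + 1))) :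
    DagBranchIn E U (f 0) (fun n => (f n).1) := by
  have hlevel : ∀ n, (f n).2 = (f 0).2 + n := by
    intro n
    induction n with
    | zero => rfl
    | succ n ih => rw [(h n).2.2.1, ih, add_assoc]
  refine ⟨rfl, fun n => ?_, fun n => ?_⟩
  · simpa [← hlevel n] using (h n).1
  · simpa [← hlevel n] using (h n).2.2.2

theorem exists_dagStep_of_not_dagFiniteIn (h : ¬ DagFiniteIn E U v) : ∃ v', DagStep E U v v' := by
  obtain ⟨b, hb0, hbU, hbE⟩ := not_not.mp h
  exact ⟨(b 1, v.2 + 1), by simpa [hb0] using hbU 0, hbU 1, rfl, by simpa [hb0] using hbE 0⟩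

theorem not_dagFiniteIn_of_edge {q q' : Q} {l : ℕ} (hq : (q, l) ∈ U) (he : E l q q')
    (h : ¬ DagFiniteIn E U (q', l + 1)) : ¬ DagFiniteIn E U (q, l) := by
  obtain ⟨b, hb0, hbU, hbE⟩ := not_not.mp h
  refine fun hfin => hfin ⟨fun t => Nat.casesOn t q b, rfl, fun t => ?_, fun t => ?_⟩
  · cases t with
    | zero => exact hq
    | succ t => simpa [add_assoc, add_comm 1] using hbU t
  · cases t with
    | zero => simpa [hb0] using he
    | succ t => simpa [add_assoc, add_comm 1] using hbE t

theorem snd_le_of_reflTransGen_dagStep (h : ReflTransGen (DagStep E U) v v') : v.2 ≤ v'.2 := by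
  induction h with
  | refl => rfl
  | tail _ hs ih => exact ih.trans (hs.2.2.1 ▸ Nat.le_succ _)

theorem DagFFreeIn.of_reflTransGen (h : DagFFreeIn E U F v) (hr : ReflTransGen (DagStep E U) v v')
    (hlive : ¬ DagFiniteIn E U v') : DagFFreeIn E U F v' :=
  ⟨hlive, fun _ h' => h.2 _ (hr.trans h')⟩

theorem exists_dagFFreeIn (hne : U.Nonempty) (hlive : ∀ v ∈ U, ¬ DagFiniteIn E U v)
    (hfair : ∀ v b, DagBranchIn E U v b → ¬ ∀ N, ∃ t ≥ N, b t ∈ F) :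
    ∃ v ∈ U, DagFFreeIn E U F v := by
  by_contra! hnf
  have hreach : ∀ v ∈ U, {n | ∃ q ∈ F, ReflTransGen (DagStep E U) v (q, v.2 + n)}.Nonempty := by
    intro v hv
    obtain ⟨v', hr, hF⟩ : ∃ v', ReflTransGen (DagStep E U) v v' ∧ v'.1 ∈ F := by
      by_contra! h
      exact hnf v hv ⟨hlive v hv, h⟩
    obtain ⟨n, hn⟩ := Nat.exists_eq_add_of_le (snd_le_of_reflTransGen_dagStep hr)
    exact ⟨n, v'.1, hF, by rwa [← hn]⟩
  let d : Q × ℕ → ℕ := fun v => sInf {n | ∃ q ∈ F, ReflTransGen (DagStep E U) v (q, v.2 + n)}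
  have hstep : ∀ v ∈ U, ∃ u ∈ U, DagStep E U v u ∧ (v.1 ∉ F → d u < d v) := by
    intro v hv
    by_cases hvF : v.1 ∈ F
    · obtain ⟨u, hu⟩ := exists_dagStep_of_not_dagFiniteIn (hlive v hv)
      exact ⟨u, hu.2.1, hu, absurd hvF⟩
    obtain ⟨q, hqF, hr⟩ : ∃ q ∈ F, ReflTransGen (DagStep E U) v (q, v.2 + d v) :=
      Nat.sInf_mem (hreach v hv)
    rcases hr.cases_head with heq | ⟨u, hu, hr'⟩
    · exact absurd (heq ▸ hqF) hvF
    have hle : u.2 ≤ v.2 + d v := snd_le_of_reflTransGen_dagStep hr'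
    have hlevel : u.2 = v.2 + 1 := hu.2.2.1
    have hdu : d u ≤ d v - 1 :=
      Nat.sInf_le ⟨q, hqF, by rwa [show u.2 + (d v - 1) = v.2 + d v by omega]⟩
    exact ⟨u, hu.2.1, hu, fun _ => by omega⟩
  obtain ⟨v₀, hv₀⟩ := hne
  obtain ⟨f, -, hfR, hfF⟩ := exists_seq_frequently_of_variant (P := fun v => v.1 ∈ F) d hstep hv₀
  exact hfair _ _ (DagBranchIn.of_dagStep hfR) hfF

end DagBranch

section DagStrip

variable {E : ℕ → Q → Q → Prop} {F : Set Q} {G0 : Set (Q × ℕ)}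

theorem dagStrip_succ_of_even {j : ℕ} (hj : j % 2 = 0) :
    DagStrip E F G0 (j + 1) = DagStrip E F G0 j \ {v | DagFiniteIn E (DagStrip E F G0 j) v} := by
  simp [DagStrip, hj]

theorem dagStrip_succ_of_odd {j : ℕ} (hj : j % 2 = 1) :
    DagStrip E F G0 (j + 1) = DagStrip E F G0 j \ {v | DagFFreeIn E (DagStrip E F G0 j) F v} := by
  simp [DagStrip, hj]

theorem dagStrip_antitone : Antitone (DagStrip E F G0) := by
  refine antitone_nat_of_succ_le fun j => ?_
  rcases Nat.mod_two_eq_zero_or_one j with hj | hj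
  · rw [dagStrip_succ_of_even hj]; exact Set.sdiff_subset
  · rw [dagStrip_succ_of_odd hj]; exact Set.sdiff_subset

theorem not_dagFiniteIn_dagStrip_of_odd {j : ℕ} (hj : j % 2 = 1) {v : Q × ℕ}
    (hv : v ∈ DagStrip E F G0 j) : ¬ DagFiniteIn E (DagStrip E F G0 j) v := by
  obtain ⟨i, rfl⟩ : ∃ i, j = i + 1 := ⟨j - 1, by omega⟩
  have hi : i % 2 = 0 := by omega
  rw [dagStrip_succ_of_even hi] at hv ⊢
  obtain ⟨b, hb⟩ := not_not.mp hv.2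
  exact fun hfin => hfin ⟨b, hb.1, fun t => ⟨hb.2.1 t, fun h => h ⟨_, hb.drop t⟩⟩, hb.2.2⟩

theorem mem_dagStrip_of_edge (hG0 : ∀ l q q', E l q q' → (q, l) ∈ G0) {l : ℕ} {q q' : Q}
    (he : E l q q') (j : ℕ) (h : (q', l + 1) ∈ DagStrip E F G0 j) : (q, l) ∈ DagStrip E F G0 j := by
  induction j with
  | zero => exact hG0 l q q' he
  | succ j ih =>
    have hq := ih (dagStrip_antitone j.le_succ h)
    rcases Nat.mod_two_eq_zero_or_one j with hj | hj
    · rw [dagStrip_succ_of_even hj] at h ⊢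
      exact ⟨hq, not_dagFiniteIn_of_edge hq he h.2⟩
    · rw [dagStrip_succ_of_odd hj] at h ⊢
      refine ⟨hq, fun hff => h.2 (hff.of_reflTransGen ?_ ?_)⟩
      · exact ReflTransGen.single ⟨hq, h.1, rfl, he⟩
      · exact not_dagFiniteIn_dagStrip_of_odd hj h.1

theorem exists_dagFFreeIn_of_dagStrip_eq_empty (hG0 : ∀ l q q', E l q q' → (q, l) ∈ G0)
    {b : ℕ → Q} (hb : ∀ l, E l (b l) (b (l + 1))) {N : ℕ} (hN : DagStrip E F G0 N = ∅) :
    ∃ i, 2 * i + 1 < N ∧ ∃ k, ∀ l ≥ k, DagFFreeIn E (DagStrip E F G0 (2 * i + 1)) F (b l, l) := by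
  have hex : ∃ j k, (b k, k) ∉ DagStrip E F G0 j := ⟨N, 0, by simp [hN]⟩
  obtain ⟨k, hk⟩ := Nat.find_spec hex
  have hbefore : ∀ j < Nat.find hex, ∀ l, (b l, l) ∈ DagStrip E F G0 j := by
    intro j hj l
    by_contra hl
    exact Nat.find_min hex hj ⟨l, hl⟩
  have hafter : ∀ l ≥ k, (b l, l) ∉ DagStrip E F G0 (Nat.find hex) := by
    intro l hl
    induction l, hl using Nat.le_induction with
    | base => exact hk
    | succ l _ ih => exact fun h => ih (mem_dagStrip_of_edge hG0 (hb l) _ h)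
  obtain ⟨m, hm⟩ : ∃ m, Nat.find hex = m + 1 := by
    refine Nat.exists_eq_add_one.mpr (Nat.pos_of_ne_zero fun h0 => ?_)
    exact hk (h0 ▸ hG0 _ _ _ (hb k))
  have hmN : m + 1 ≤ N := hm ▸ Nat.find_min' hex ⟨0, by simp [hN]⟩
  have hin : ∀ l, (b l, l) ∈ DagStrip E F G0 m := hbefore m (by omega)
  rcases Nat.mod_two_eq_zero_or_one m with hm2 | hm2
  · have hk' := hafter k le_rfl
    rw [hm, dagStrip_succ_of_even hm2] at hk'
    have hfin : DagFiniteIn E (DagStrip E F G0 m) (b k, k) := not_not.mp fun h => hk' ⟨hin k, h⟩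
    exact (hfin ⟨fun t => b (k + t), rfl, fun t => hin (k + t), fun t => hb (k + t)⟩).elim
  · refine ⟨m / 2, by omega, k, fun l hl => ?_⟩
    have hl' := hafter l hl
    rw [hm, dagStrip_succ_of_odd hm2] at hl'
    rw [show 2 * (m / 2) + 1 = m by omega]
    exact not_not.mp fun hff => hl' ⟨hin l, hff⟩

end DagStrip

section DagStripWidth

variable [Finite Q] {E : ℕ → Q → Q → Prop} {F : Set Q} {G0 : Set (Q × ℕ)}

theorem ncard_dagStrip_level_le (hfair : ∀ v b, DagBranchIn E G0 v b → ¬ ∀ N, ∃ t ≥ N, b t ∈ F)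
    (i : ℕ) : ∃ L, ∀ l ≥ L, {q | (q, l) ∈ DagStrip E F G0 (2 * i)}.ncard ≤ Nat.card Q - i := by
  induction i with
  | zero => exact ⟨0, fun l _ => Set.ncard_le_card _⟩
  | succ i ih =>
    obtain ⟨L, hL⟩ := ih
    have hodd : (2 * i + 1) % 2 = 1 := by omega
    have hstrip : DagStrip E F G0 (2 * (i + 1)) = DagStrip E F G0 (2 * i + 1) \
        {v | DagFFreeIn E (DagStrip E F G0 (2 * i + 1)) F v} := dagStrip_succ_of_odd hodd
    rcases (DagStrip E F G0 (2 * i + 1)).eq_empty_or_nonempty with hemp | hne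
    · exact ⟨0, fun l _ => by simp [hstrip, hemp]⟩
    obtain ⟨v, -, hv⟩ := exists_dagFFreeIn hne (fun _ => not_dagFiniteIn_dagStrip_of_odd hodd)
      fun v b hb => hfair v b (hb.mono (dagStrip_antitone (Nat.zero_le _)))
    obtain ⟨b, hb⟩ := not_not.mp hv.1
    refine ⟨max L v.2, fun l hl => ?_⟩
    obtain ⟨t, rfl⟩ : ∃ t, l = v.2 + t := ⟨l - v.2, by omega⟩
    have hbt := hb.2.1 t
    have hff : DagFFreeIn E (DagStrip E F G0 (2 * i + 1)) F (b t, v.2 + t) :=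
      hv.of_reflTransGen (hb.reflTransGen t) (not_dagFiniteIn_dagStrip_of_odd hodd hbt)
    have hsub : {q | (q, v.2 + t) ∈ DagStrip E F G0 (2 * (i + 1))} ⊆
        {q | (q, v.2 + t) ∈ DagStrip E F G0 (2 * i)} :=
      fun _ hq => dagStrip_antitone (show 2 * i ≤ 2 * (i + 1) by omega) hq
    have hbt_out : (b t, v.2 + t) ∉ DagStrip E F G0 (2 * (i + 1)) := by
      rw [hstrip]
      exact fun h => h.2 hff
    have hlt := Set.ncard_lt_ncard ((Set.ssubset_iff_of_subset hsub).mpr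
      ⟨b t, dagStrip_antitone (show 2 * i ≤ 2 * i + 1 by omega) hbt, hbt_out⟩) (Set.toFinite _)
    have hle := hL _ (le_of_max_le_left hl)
    omega

theorem dagStrip_eq_empty (hfair : ∀ v b, DagBranchIn E G0 v b → ¬ ∀ N, ∃ t ≥ N, b t ∈ F) :
    DagStrip E F G0 (2 * Nat.card Q + 1) = ∅ := by
  obtain ⟨L, hL⟩ := ncard_dagStrip_level_le hfair (Nat.card Q)
  refine Set.eq_empty_of_forall_notMem fun v hv => ?_
  rw [dagStrip_succ_of_even (by omega)] at hv
  obtain ⟨b, hb⟩ := not_not.mp hv.2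
  have hlevel := hL (v.2 + L) (by omega)
  rw [Nat.sub_self, Nat.le_zero, Set.ncard_eq_zero (Set.toFinite _)] at hlevel
  exact Set.eq_empty_iff_forall_notMem.mp hlevel (b L) (hb.2.1 L)

end DagStripWidth

namespace NBW

variable {M : NBW Q A} {w : ℕ → A}

theorem IsRun.isBranch {ρ : ℕ → Q} (h : M.IsRun w ρ) : M.IsBranch w ρ := by
  have hV : ∀ l, ρ l ∈ M.V w l := by
    intro l
    induction l with
    | zero => exact h.1
    | succ l ih => exact Set.mem_biUnion ih (h.2 l)
  exact ⟨h.1, fun l => ⟨hV l, h.2 l⟩⟩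

theorem accepts_of_edge_path {l : ℕ} {b : ℕ → Q} (hb : ∀ i, M.Edge w (l + i) (b i) (b (i + 1)))
    (hF : ∀ N, ∃ t ≥ N, b t ∈ M.F) : M.Accepts w := by
  induction l generalizing b with
  | zero => exact ⟨b, ⟨by simpa [V] using (hb 0).1, fun i => by simpa using (hb i).2⟩, hF⟩
  | succ l ih =>
    obtain ⟨p, hp, hpb⟩ : ∃ p ∈ M.V w l, b 0 ∈ M.δ p (w l) := by
      simpa [V, δset] using (hb 0).1
    refine ih (b := fun t => Nat.casesOn t p b) (fun i => ?_) fun N => ?_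
    · cases i with
      | zero => exact ⟨hp, hpb⟩
      | succ i => simpa [add_assoc, add_comm 1] using hb i
    · obtain ⟨t, ht, htF⟩ := hF N
      exact ⟨t + 1, by omega, htF⟩

end NBW

theorem not_accepts_iff_ranking_general
    [Fintype Q] (M : NBW Q A) (w : ℕ → A) :
    ¬ M.Accepts w ↔
      (DagStrip (M.Edge w) M.F (M.DagVertices w) (2 * Fintype.card Q + 1) = ∅ ∧
       ∀ b : ℕ → Q, M.IsBranch w b → ∃ k, ∀ l ≥ k, ∃ i,
         2 * i + 1 ≤ 2 * Fintype.card Q ∧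
         DagFFreeIn (M.Edge w) (DagStrip (M.Edge w) M.F (M.DagVertices w) (2 * i + 1))
           M.F (b l, l)) := by
  have hG0 : ∀ l q q', M.Edge w l q q' → (q, l) ∈ M.DagVertices w := fun _ _ _ he => he.1
  constructor
  · intro hrej
    have hempty : DagStrip (M.Edge w) M.F (M.DagVertices w) (2 * Fintype.card Q + 1) = ∅ := by
      rw [← Nat.card_eq_fintype_card]
      exact dagStrip_eq_empty fun _ _ hb hF => hrej (NBW.accepts_of_edge_path hb.2.2 hF)
    refine ⟨hempty, fun b hb => ?_⟩
    obtain ⟨i, hi, k, hk⟩ := exists_dagFFreeIn_of_dagStrip_eq_empty hG0 hb.2 hempty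
    exact ⟨k, fun l hl => ⟨i, by omega, hk l hl⟩⟩
  · rintro ⟨-, htrap⟩ ⟨ρ, hrun, hinf⟩
    obtain ⟨k, hk⟩ := htrap ρ hrun.isBranch
    obtain ⟨l, hl, hF⟩ := hinf k
    obtain ⟨i, -, hff⟩ := hk l hl
    exact hff.2 _ .refl hF

/-- nonaccepting DAGs via the unique ranking function: `M` rejects `w` iff
the stripping sequence on `G_{w,M}` terminates by step `2n+1` (so the induced ranking has
maximum rank at most `2n`, with `G^{2n+1}` empty), and every ω-branch of `G_{w,M}`
eventually gets trapped in odd ranks (from some level on, each of its vertices is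
`F`-free in some `G^{2i+1}` with `2i+1 ≤ 2n`). -/
theorem not_accepts_iff_ranking
    [Fintype Q] (M : NBW Q A) (hc : M.Complete) (w : ℕ → A) :
    ¬ M.Accepts w ↔
      (DagStrip (M.Edge w) M.F (M.DagVertices w) (2 * Fintype.card Q + 1) = ∅ ∧
       ∀ b : ℕ → Q, M.IsBranch w b → ∃ k, ∀ l ≥ k, ∃ i,
         2 * i + 1 ≤ 2 * Fintype.card Q ∧
         DagFFreeIn (M.Edge w) (DagStrip (M.Edge w) M.F (M.DagVertices w) (2 * i + 1))
           M.F (b l, l)) :=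
  not_accepts_iff_ranking_general M w
end

section
/- The slice-based construction for general NBWs yields a co-deterministic DAG G^s_{w,A} whose levels are ordered sequences of pairwise disjoint nonempty sets of states, such that: (1) the number of ω-branches of G^s_{w,A} is at most |Q|; (2) w ∈ L(A) iff G^s_{w,A} has an accepting ω-branch; (3) w ∉ L(A) iff there is a stable level l ≥ 1 after which every F-vertex of G^s_{w,A} is finite. -/
open Classical

variable {Q : Type} {A : Type}

/-!
Position `j` of a level has children `2j` and `2j + 1`, and the odd positions are exactly those
inside `F`. Along a run the position of the current state at least doubles at each step, so its
ancestors at any fixed level move right and stabilise; the limit is a branch, and it is accepting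
whenever the run is. Conversely, Kőnig's lemma extracts an accepting run from an accepting branch.
The sets of a level are disjoint and distinct branches eventually separate, so there are at most
`|Q|` branches; this turns infinitely many `F`-vertices with infinite branches into one accepting
branch, which gives the last part.
-/

open Filter

theorem Finite.exists_forall_of_antitone {α : Type*} [Finite α] {P : ℕ → α → Prop}
    (hP : Antitone P) (h : ∀ n, ∃ x, P n x) : ∃ x, ∀ n, P n x := by
  obtain ⟨x, hx⟩ := frequently_exists.mp (Eventually.of_forall (f := atTop) h).frequently
  refine ⟨x, fun n => ?_⟩
  obtain ⟨m, hnm, hm⟩ := frequently_atTop.mp hx n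
  exact hP hnm x hm

section Konig

variable {α : Type*} (T : ℕ → Set α) (R : ℕ → α → α → Prop)

def HasForwardPath : ℕ → ℕ → α → Prop
  | 0, l, x => x ∈ T l
  | n + 1, l, x => x ∈ T l ∧ ∃ y, R l x y ∧ HasForwardPath n (l + 1) y

variable {T R}

theorem HasForwardPath.mem : ∀ {n l x}, HasForwardPath T R n l x → x ∈ T l
  | 0, _, _, h => h
  | _ + 1, _, _, h => h.1

theorem hasForwardPath_antitone : Antitone fun n l x => HasForwardPath T R n l x := by
  refine antitone_nat_of_succ_le fun n => ?_
  induction n with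
  | zero => exact fun l x h => h.1
  | succ n ih => exact fun l x ⟨hx, y, hxy, hy⟩ => ⟨hx, y, hxy, ih (l + 1) y hy⟩

theorem exists_hasForwardPath (hT : ∀ l, (T l).Nonempty)
    (hpred : ∀ l, ∀ y ∈ T (l + 1), ∃ x ∈ T l, R l x y) :
    ∀ n l, ∃ x, HasForwardPath T R n l x
  | 0, l => hT l
  | n + 1, l => by
    obtain ⟨y, hy⟩ := exists_hasForwardPath hT hpred n (l + 1)
    obtain ⟨x, hx, hxy⟩ := hpred l y hy.mem
    exact ⟨x, hx, y, hxy, hy⟩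

theorem exists_seq_of_forall_exists_pred [Finite α] (hT : ∀ l, (T l).Nonempty)
    (hpred : ∀ l, ∀ y ∈ T (l + 1), ∃ x ∈ T l, R l x y) :
    ∃ ρ : ℕ → α, (∀ l, ρ l ∈ T l) ∧ ∀ l, R l (ρ l) (ρ (l + 1)) := by
  have hstart : ∀ l, ∃ x, ∀ n, HasForwardPath T R n l x := fun l =>
    Finite.exists_forall_of_antitone (fun _ _ h => hasForwardPath_antitone h l)
      (exists_hasForwardPath hT hpred · l)
  have hstep : ∀ l x, (∀ n, HasForwardPath T R n l x) →
      ∃ y, ∀ n, R l x y ∧ HasForwardPath T R n (l + 1) y := fun l x hx =>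
    Finite.exists_forall_of_antitone
      (fun _ _ h y ⟨hxy, hy⟩ => ⟨hxy, hasForwardPath_antitone h (l + 1) y hy⟩)
      (fun n => (hx (n + 1)).2)
  obtain ⟨x₀, hx₀⟩ := hstart 0
  choose! next hnext using hstep
  let ρ : ℕ → α := fun l => Nat.rec x₀ next l
  have hgood : ∀ l n, HasForwardPath T R n l (ρ l) := by
    intro l
    induction l with
    | zero => exact hx₀
    | succ l ih => exact fun n => (hnext l (ρ l) ih n).2
  exact ⟨ρ, fun l => (hgood l 0).mem, fun l => (hnext l (ρ l) (hgood l) 0).1⟩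

end Konig

section LimitBranch

/-- When `a` at least doubles at each step, the prefixes `a (k + n) / 2 ^ n` increase with `n`
and are bounded, so this supremum is their eventual value. -/
noncomputable def limitBranch (a : ℕ → ℕ) (k : ℕ) : ℕ := ⨆ n, a (k + n) / 2 ^ n

variable {a : ℕ → ℕ}

theorem monotone_div_two_pow (hstep : ∀ l, 2 * a l ≤ a (l + 1)) (k : ℕ) :
    Monotone fun n => a (k + n) / 2 ^ n := by
  refine monotone_nat_of_le_succ fun n => ?_
  rw [pow_succ', ← Nat.div_div_eq_div_mul, ← add_assoc]
  exact Nat.div_le_div_right ((Nat.le_div_iff_mul_le two_pos).mpr (by linarith [hstep (k + n)]))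

theorem bddAbove_range_div_two_pow (hbd : ∀ l, a l < 2 ^ (l + 1)) (k : ℕ) :
    BddAbove (Set.range fun n => a (k + n) / 2 ^ n) := by
  refine ⟨2 ^ (k + 1), ?_⟩
  rintro _ ⟨n, rfl⟩
  refine (Nat.div_lt_iff_lt_mul (by positivity)).mpr ?_ |>.le
  calc a (k + n) < 2 ^ (k + n + 1) := hbd (k + n)
    _ = 2 ^ (k + 1) * 2 ^ n := by ring

theorem div_two_pow_le_limitBranch (hbd : ∀ l, a l < 2 ^ (l + 1)) (k n : ℕ) :
    a (k + n) / 2 ^ n ≤ limitBranch a k :=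
  le_ciSup (bddAbove_range_div_two_pow hbd k) n

theorem eventually_div_two_pow_eq_limitBranch (hstep : ∀ l, 2 * a l ≤ a (l + 1))
    (hbd : ∀ l, a l < 2 ^ (l + 1)) (k : ℕ) :
    ∀ᶠ n in atTop, a (k + n) / 2 ^ n = limitBranch a k := by
  have h := tendsto_atTop_ciSup (monotone_div_two_pow hstep k) (bddAbove_range_div_two_pow hbd k)
  rwa [nhds_discrete, tendsto_pure] at h

theorem limitBranch_succ_div_two (hstep : ∀ l, 2 * a l ≤ a (l + 1))
    (hbd : ∀ l, a l < 2 ^ (l + 1)) (k : ℕ) :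
    limitBranch a (k + 1) / 2 = limitBranch a k := by
  have hshift := (tendsto_add_atTop_nat 1).eventually
    (eventually_div_two_pow_eq_limitBranch hstep hbd k)
  obtain ⟨n, hsucc, hk⟩ :=
    ((eventually_div_two_pow_eq_limitBranch hstep hbd (k + 1)).and hshift).exists
  rw [← hsucc, ← hk, Nat.div_div_eq_div_mul, ← pow_succ, add_right_comm, add_assoc]

/-- If `a` is odd infinitely often then so is its limit branch: were the limit branch even
from level `K` on, `a` would eventually coincide with it, hence be even. -/
theorem frequently_odd_limitBranch (hstep : ∀ l, 2 * a l ≤ a (l + 1))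
    (hbd : ∀ l, a l < 2 ^ (l + 1)) (hodd : ∃ᶠ l in atTop, Odd (a l)) :
    ∃ᶠ k in atTop, Odd (limitBranch a k) := by
  by_contra h
  obtain ⟨K, hK⟩ := eventually_atTop.mp (not_frequently.mp h)
  have hpow : ∀ n, limitBranch a (K + n) = 2 ^ n * limitBranch a K := by
    intro n
    induction n with
    | zero => simp
    | succ n ih =>
      have heven := Nat.not_odd_iff_even.mp (hK (K + (n + 1)) (by omega))
      rw [← Nat.two_mul_div_two_of_even heven, ← add_assoc, limitBranch_succ_div_two hstep hbd,
        ih, pow_succ']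
      ring
  obtain ⟨N, hN⟩ := eventually_atTop.mp (eventually_div_two_pow_eq_limitBranch hstep hbd K)
  obtain ⟨l, hl, hodd_l⟩ := frequently_atTop.mp hodd (K + N + 1)
  obtain ⟨n, rfl⟩ : ∃ n, l = K + n := ⟨l - K, by omega⟩
  have hupper : a (K + n) ≤ 2 ^ n * limitBranch a K := by
    simpa [hpow] using div_two_pow_le_limitBranch hbd (K + n) 0
  have hlower : 2 ^ n * limitBranch a K ≤ a (K + n) := by
    rw [← hN n (by omega), mul_comm]
    exact Nat.div_mul_le_self _ _
  have hn : n = n - 1 + 1 := by omega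
  rw [le_antisymm hupper hlower, hn, pow_succ', mul_assoc] at hodd_l
  exact Nat.not_odd_iff_even.mpr (even_two_mul _) hodd_l

end LimitBranch

namespace NBW

variable {M : NBW Q A} {w : ℕ → A}

theorem mem_δset {S : Set Q} {a : A} {y : Q} :
    y ∈ M.δset S a ↔ ∃ x ∈ S, y ∈ M.δ x a := by
  simp [δset]

variable (M w) in
/-- The set `S'_q` from which position `q` of level `l + 1` is cut out. -/
noncomputable def sliceCandidate (l q : ℕ) : Set Q :=
  if q % 2 = 0 then M.δset (M.sliceSet w l (q / 2)) (w l) \ M.F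
  else M.δset (M.sliceSet w l (q / 2)) (w l) ∩ M.F

theorem sliceSet_succ (l p : ℕ) :
    M.sliceSet w (l + 1) p = M.sliceCandidate w l p \ ⋃ q ∈ Set.Ioi p, M.sliceCandidate w l q :=
  rfl

theorem sliceCandidate_subset (l q : ℕ) :
    M.sliceCandidate w l q ⊆ M.δset (M.sliceSet w l (q / 2)) (w l) := by
  unfold sliceCandidate
  split
  · exact Set.sdiff_subset
  · exact Set.inter_subset_left

theorem sliceSet_succ_subset (l p : ℕ) :
    M.sliceSet w (l + 1) p ⊆ M.δset (M.sliceSet w l (p / 2)) (w l) :=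
  Set.sdiff_subset.trans (sliceCandidate_subset l p)

theorem sliceSet_zero_subset (p : ℕ) : M.sliceSet w 0 p ⊆ M.I := by
  simp only [sliceSet]
  split_ifs
  exacts [Set.sdiff_subset, Set.inter_subset_left, Set.empty_subset _]

theorem nonempty_sliceSet_div_two {l p : ℕ} (h : (M.sliceSet w (l + 1) p).Nonempty) :
    (M.sliceSet w l (p / 2)).Nonempty := by
  obtain ⟨y, hy⟩ := h
  obtain ⟨x, hx, -⟩ := mem_δset.mp (sliceSet_succ_subset l p hy)
  exact ⟨x, hx⟩

theorem nonempty_sliceSet_div_two_pow {l p : ℕ} :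
    ∀ n, (M.sliceSet w (l + n) p).Nonempty → (M.sliceSet w l (p / 2 ^ n)).Nonempty
  | 0, h => by simpa using h
  | n + 1, h => by
    rw [pow_succ', ← Nat.div_div_eq_div_mul]
    exact nonempty_sliceSet_div_two_pow n (nonempty_sliceSet_div_two h)

theorem lt_two_pow_of_nonempty_sliceSet :
    ∀ {l p : ℕ}, (M.sliceSet w l p).Nonempty → p < 2 ^ (l + 1)
  | 0, p, h => by
    simp only [sliceSet] at h
    split_ifs at h <;> first | omega | simp at h
  | l + 1, p, h => by
    have := lt_two_pow_of_nonempty_sliceSet (nonempty_sliceSet_div_two h)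
    rw [pow_succ]
    omega

theorem sliceSet_disjoint (l : ℕ) {p p' : ℕ} (h : p ≠ p') :
    Disjoint (M.sliceSet w l p) (M.sliceSet w l p') := by
  wlog hlt : p < p' generalizing p p'
  · exact (this h.symm (by omega)).symm
  cases l with
  | zero =>
    simp only [sliceSet]
    split_ifs <;> first | omega | exact Set.disjoint_sdiff_inter | simp
  | succ l =>
    rw [Set.disjoint_left]
    intro x hx hx'
    exact (sliceSet_succ l p ▸ hx).2 (Set.mem_biUnion hlt (Set.sdiff_subset hx'))

theorem eq_of_mem_sliceSet {l p p' : ℕ} {x : Q} (hx : x ∈ M.sliceSet w l p)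
    (hx' : x ∈ M.sliceSet w l p') : p = p' := by
  by_contra h
  exact Set.disjoint_left.mp (sliceSet_disjoint l h) hx hx'

theorem mem_F_iff_odd {l p : ℕ} {x : Q} (hx : x ∈ M.sliceSet w l p) : x ∈ M.F ↔ Odd p := by
  cases l with
  | zero =>
    simp only [sliceSet] at hx
    split_ifs at hx with h0 h1
    · simp [h0, hx.2]
    · simp [h1, hx.2]
    · simp at hx
  | succ l =>
    have hx := (sliceSet_succ l p ▸ hx).1
    unfold sliceCandidate at hx
    split_ifs at hx with hp
    · simp [hx.2, Nat.odd_iff, hp]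
    · simp [hx.2, Nat.odd_iff, Nat.mod_two_ne_zero.mp hp]

theorem sliceSet_subset_F_of_odd {l p : ℕ} (hp : Odd p) : M.sliceSet w l p ⊆ M.F :=
  fun _ hx => (mem_F_iff_odd hx).mpr hp

/-- A successor of a state at position `p` lands at position `2p` or `2p + 1` of the candidate
sets and survives at its rightmost occurrence, which lies further right. -/
theorem exists_mem_sliceSet_succ {l p : ℕ} {x y : Q} (hx : x ∈ M.sliceSet w l p)
    (hy : y ∈ M.δ x (w l)) : ∃ p' ≥ 2 * p, y ∈ M.sliceSet w (l + 1) p' := by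
  set S : Set ℕ := {q | y ∈ M.sliceCandidate w l q}
  have hyδ : y ∈ M.δset (M.sliceSet w l p) (w l) := mem_δset.mpr ⟨x, hx, hy⟩
  have hq₀ : (if y ∈ M.F then 2 * p + 1 else 2 * p) ∈ S := by
    have hodd : (2 * p + 1) / 2 = p := by omega
    by_cases hF : y ∈ M.F <;> simp [S, sliceCandidate, hF, hyδ, hodd]
  have hbdd : BddAbove S := by
    refine ⟨2 ^ (l + 2), fun q hq => ?_⟩
    obtain ⟨z, hz, -⟩ := mem_δset.mp (sliceCandidate_subset l q hq)
    have := lt_two_pow_of_nonempty_sliceSet ⟨z, hz⟩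
    rw [pow_succ]
    omega
  refine ⟨sSup S, ?_, ?_⟩
  · have := le_csSup hbdd hq₀
    split_ifs at this <;> omega
  · rw [sliceSet_succ]
    refine ⟨Nat.sSup_mem ⟨_, hq₀⟩ hbdd, fun hmem => ?_⟩
    obtain ⟨q, hq, hyq⟩ := Set.mem_iUnion₂.mp hmem
    exact (le_csSup hbdd hyq).not_gt hq

theorem exists_mem_sliceSet_of_isRun {ρ : ℕ → Q} (hρ : M.IsRun w ρ) :
    ∀ l, ∃ p, ρ l ∈ M.sliceSet w l p
  | 0 => by
    by_cases hF : ρ 0 ∈ M.F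
    · exact ⟨1, by simp [sliceSet, hρ.1, hF]⟩
    · exact ⟨0, by simp [sliceSet, hρ.1, hF]⟩
  | l + 1 => by
    obtain ⟨p, hp⟩ := exists_mem_sliceSet_of_isRun hρ l
    obtain ⟨p', -, hp'⟩ := exists_mem_sliceSet_succ hp (hρ.2 l)
    exact ⟨p', hp'⟩

theorem exists_isSliceBranch_of_accepts (h : M.Accepts w) :
    ∃ g, M.IsSliceBranch w g ∧ ∃ᶠ m in atTop, M.sliceSet w m (g m) ⊆ M.F := by
  obtain ⟨ρ, hρ, hF⟩ := h
  choose pos hpos using exists_mem_sliceSet_of_isRun hρ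
  have hstep : ∀ l, 2 * pos l ≤ pos (l + 1) := fun l => by
    obtain ⟨p', hp', hy⟩ := exists_mem_sliceSet_succ (hpos l) (hρ.2 l)
    rwa [eq_of_mem_sliceSet hy (hpos (l + 1))] at hp'
  have hbd : ∀ l, pos l < 2 ^ (l + 1) := fun l => lt_two_pow_of_nonempty_sliceSet ⟨_, hpos l⟩
  refine ⟨limitBranch pos, ⟨fun k => ?_, limitBranch_succ_div_two hstep hbd⟩, ?_⟩
  · obtain ⟨n, hn⟩ := (eventually_div_two_pow_eq_limitBranch hstep hbd k).exists
    rw [← hn, ← Set.nonempty_iff_ne_empty]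
    exact nonempty_sliceSet_div_two_pow n ⟨_, hpos (k + n)⟩
  · have hodd : ∃ᶠ l in atTop, Odd (pos l) := frequently_atTop.mpr fun n =>
      (hF n).imp fun m ⟨hm, hmF⟩ => ⟨hm, (mem_F_iff_odd (hpos m)).mp hmF⟩
    exact (frequently_odd_limitBranch hstep hbd hodd).mono fun k => sliceSet_subset_F_of_odd

theorem accepts_of_isSliceBranch [Finite Q] {g : ℕ → ℕ} (hg : M.IsSliceBranch w g)
    (hF : ∃ᶠ m in atTop, M.sliceSet w m (g m) ⊆ M.F) : M.Accepts w := by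
  have hpred : ∀ l, ∀ y ∈ M.sliceSet w (l + 1) (g (l + 1)),
      ∃ x ∈ M.sliceSet w l (g l), y ∈ M.δ x (w l) := fun l y hy =>
    mem_δset.mp (hg.2 l ▸ sliceSet_succ_subset l _ hy)
  obtain ⟨ρ, hρT, hρδ⟩ := exists_seq_of_forall_exists_pred
    (fun l => Set.nonempty_iff_ne_empty.mpr (hg.1 l)) hpred
  refine ⟨ρ, ⟨sliceSet_zero_subset _ (hρT 0), hρδ⟩, fun n => ?_⟩
  obtain ⟨m, hm, hmF⟩ := frequently_atTop.mp hF n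
  exact ⟨m, hm, hmF (hρT m)⟩

theorem IsSliceBranch.eventually_ne {g g' : ℕ → ℕ} (hg : M.IsSliceBranch w g)
    (hg' : M.IsSliceBranch w g') (h : g ≠ g') : ∀ᶠ l in atTop, g l ≠ g' l := by
  obtain ⟨l₀, hl₀⟩ := Function.ne_iff.mp h
  refine eventually_atTop.mpr ⟨l₀, fun l hl => ?_⟩
  induction l, hl using Nat.le_induction with
  | base => exact hl₀
  | succ l _ ih => exact fun heq => ih (by rw [← hg.2 l, ← hg'.2 l, heq])

theorem IsSliceBranch.sliceBranchFrom {g : ℕ → ℕ} (hg : M.IsSliceBranch w g) (l : ℕ) :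
    M.SliceBranchFrom w l (g l) :=
  ⟨fun i => g (l + i), rfl, fun i => hg.1 (l + i), fun i => hg.2 (l + i)⟩

/-- A branch from position `p` of level `l` is completed below `l` by the ancestors of `p`. -/
theorem SliceBranchFrom.exists_isSliceBranch {l p : ℕ} (h : M.SliceBranchFrom w l p) :
    ∃ g, M.IsSliceBranch w g ∧ g l = p := by
  obtain ⟨b, rfl, hne, hdiv⟩ := h
  refine ⟨fun i => b (i - l) / 2 ^ (l - i), ⟨fun i => ?_, fun i => ?_⟩, by simp⟩
  · dsimp only
    rw [← Set.nonempty_iff_ne_empty]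
    rcases le_total i l with hil | hli
    · rw [Nat.sub_eq_zero_of_le hil]
      refine nonempty_sliceSet_div_two_pow _ ?_
      rw [Nat.add_sub_cancel' hil]
      exact Set.nonempty_iff_ne_empty.mpr (hne 0)
    · rw [Nat.sub_eq_zero_of_le hli, pow_zero, Nat.div_one]
      simpa [Nat.add_sub_cancel' hli, Set.nonempty_iff_ne_empty] using hne (i - l)
  · dsimp only
    rcases lt_or_ge i l with hil | hli
    · rw [Nat.sub_eq_zero_of_le hil, Nat.sub_eq_zero_of_le hil.le, Nat.div_div_eq_div_mul,
        ← pow_succ]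
      congr 2
      omega
    · rw [Nat.sub_eq_zero_of_le hli, Nat.sub_eq_zero_of_le (hli.trans (Nat.le_succ i)), pow_zero,
        Nat.div_one, Nat.div_one, Nat.sub_add_comm hli]
      exact hdiv (i - l)

theorem card_le_of_nonempty_sliceSet [Fintype Q] (l : ℕ) (s : Finset ℕ)
    (hs : ∀ p ∈ s, (M.sliceSet w l p).Nonempty) : s.card ≤ Fintype.card Q := by
  refine (Finset.card_le_card_biUnion (f := fun p => (M.sliceSet w l p).toFinset) ?_ ?_).trans
    (Finset.card_le_univ _)
  · exact fun p _ p' _ h => Set.disjoint_toFinset.mpr (sliceSet_disjoint l h)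
  · simpa using hs

/-- Distinct branches eventually sit at distinct positions, and positions of one level carry
disjoint nonempty sets. -/
theorem card_le_of_forall_isSliceBranch [Fintype Q] (t : Finset (ℕ → ℕ))
    (ht : ∀ g ∈ t, M.IsSliceBranch w g) : t.card ≤ Fintype.card Q := by
  have hsep : ∀ g ∈ t, ∀ g' ∈ t, ∀ᶠ l in atTop, g l = g' l → g = g' := by
    intro g hg g' hg'
    by_cases h : g = g'
    · exact Eventually.of_forall fun _ _ => h
    · exact ((ht g hg).eventually_ne (ht g' hg') h).mono fun _ hl heq => absurd heq hl
  obtain ⟨L, hL⟩ : ∃ L, Set.InjOn (fun g : ℕ → ℕ => g L) t :=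
    ((eventually_all_finset t).mpr fun g hg => (eventually_all_finset t).mpr (hsep g hg)).exists
  rw [← Finset.card_image_of_injOn hL]
  refine card_le_of_nonempty_sliceSet (M := M) (w := w) L _ fun p hp => ?_
  obtain ⟨g, hg, rfl⟩ := Finset.mem_image.mp hp
  exact Set.nonempty_iff_ne_empty.mpr ((ht g hg).1 L)

theorem finite_setOf_isSliceBranch [Finite Q] : {g | M.IsSliceBranch w g}.Finite := by
  have := Fintype.ofFinite Q
  refine Set.not_infinite.mp fun hinf => ?_
  obtain ⟨t, hts, htc⟩ := hinf.exists_subset_card_eq (Fintype.card Q + 1)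
  have := card_le_of_forall_isSliceBranch t hts
  omega

theorem ncard_setOf_isSliceBranch_le [Fintype Q] :
    {g | M.IsSliceBranch w g}.ncard ≤ Fintype.card Q := by
  rw [Set.ncard_eq_toFinset_card _ finite_setOf_isSliceBranch]
  exact card_le_of_forall_isSliceBranch _ fun g hg => by simpa using hg

theorem accepts_iff_exists_isSliceBranch [Finite Q] : M.Accepts w ↔
    ∃ g, M.IsSliceBranch w g ∧ ∃ᶠ m in atTop, M.sliceSet w m (g m) ⊆ M.F :=
  ⟨exists_isSliceBranch_of_accepts, fun ⟨_, hg, hgF⟩ => accepts_of_isSliceBranch hg hgF⟩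

/-- There are finitely many branches, so one of them passes through infinitely many of these
`F`-vertices. -/
theorem accepts_of_frequently_sliceBranchFrom [Finite Q]
    (h : ∃ᶠ l in atTop, ∃ p, M.sliceSet w l p ⊆ M.F ∧ M.SliceBranchFrom w l p) :
    M.Accepts w := by
  have hbranch :
      ∃ᶠ l in atTop, ∃ g : {g // M.IsSliceBranch w g}, M.sliceSet w l (g.1 l) ⊆ M.F :=
    h.mono fun _ ⟨_, hpF, hp⟩ =>
      let ⟨g, hg, hgl⟩ := hp.exists_isSliceBranch
      ⟨⟨g, hg⟩, show M.sliceSet w _ (g _) ⊆ M.F by rwa [hgl]⟩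
  have : Finite {g // M.IsSliceBranch w g} := finite_setOf_isSliceBranch.to_subtype
  obtain ⟨⟨g, hg⟩, hgF⟩ := frequently_exists.mp hbranch
  exact accepts_of_isSliceBranch hg hgF

theorem not_accepts_iff_eventually_finite_F_vertices [Finite Q] : ¬ M.Accepts w ↔
    ∃ l ≥ 1, ∀ l' ≥ l, ∀ p : ℕ, M.sliceSet w l' p ≠ ∅ →
      M.sliceSet w l' p ⊆ M.F → ¬ M.SliceBranchFrom w l' p := by
  constructor
  · intro hna
    by_contra h
    push Not at h
    refine hna (accepts_of_frequently_sliceBranchFrom (frequently_atTop.mpr fun n => ?_))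
    obtain ⟨l', hl', p, -, hpF, hp⟩ := h (n + 1) (by omega)
    exact ⟨l', by omega, p, hpF, hp⟩
  · rintro ⟨l, -, H⟩ hacc
    obtain ⟨g, hg, hgF⟩ := exists_isSliceBranch_of_accepts hacc
    obtain ⟨m, hm, hmF⟩ := frequently_atTop.mp hgF l
    exact H m hm _ (hg.1 m) hmF (hg.sliceBranchFrom m)

end NBW

/-- the slice-based construction yields a co-deterministic DAG
`G^s_{w,M}` whose levels consist of pairwise disjoint sets, such that
(1) the number of ω-branches of `G^s_{w,M}` is at most `|Q|`;
(2) `w ∈ L(M)` iff `G^s_{w,M}` has an accepting ω-branch (visiting `F`-vertices,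
i.e. positions whose set is contained in `F`, infinitely often);
(3) `w ∉ L(M)` iff there is a stable level `l ≥ 1` after which every `F`-vertex of
`G^s_{w,M}` is finite. -/
theorem slice_dag_properties
    [Fintype Q] (M : NBW Q A) (w : ℕ → A) :
    (∀ (l p p' : ℕ), p ≠ p' → Disjoint (M.sliceSet w l p) (M.sliceSet w l p')) ∧
    ({g : ℕ → ℕ | M.IsSliceBranch w g}.Finite ∧
      {g : ℕ → ℕ | M.IsSliceBranch w g}.ncard ≤ Fintype.card Q) ∧
    (M.Accepts w ↔
      ∃ g, M.IsSliceBranch w g ∧ ∀ n, ∃ m ≥ n, M.sliceSet w m (g m) ⊆ M.F) ∧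
    (¬ M.Accepts w ↔
      ∃ l ≥ 1, ∀ l' ≥ l, ∀ p : ℕ, M.sliceSet w l' p ≠ ∅ →
        M.sliceSet w l' p ⊆ M.F → ¬ M.SliceBranchFrom w l' p) := by
  refine ⟨fun l _ _ => NBW.sliceSet_disjoint l,
    ⟨NBW.finite_setOf_isSliceBranch, NBW.ncard_setOf_isSliceBranch_le⟩, ?_,
    NBW.not_accepts_iff_eventually_finite_F_vertices⟩
  simpa only [frequently_atTop] using NBW.accepts_iff_exists_isSliceBranch
end

section
/- The complementary NBW A^c of an FANBW produced by the (N,C,B)-construction is limit deterministic: Q^c partitions into Q^c_N ⊆ 2^Q and Q^c_D ⊆ 2^Q × 2^Q × 2^Q such that all accepting states lie in Q^c_D, and every state in Q^c_D has at most one a-successor for each letter a, with all those successors again in Q^c_D. -/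
open Classical

variable {Q : Type} {A : Type}

namespace NBW

variable [LinearOrder Q] (M : NBW Q A)

theorem ncbComplement_δ_inr (t : Set Q × Set Q × Set Q) (a : A) :
    M.ncbComplement.δ (Sum.inr t) a = {Sum.inr (M.ncbStep a t)} :=
  rfl

theorem ncbComplement_F_subset_range_inr :
    M.ncbComplement.F ⊆ Set.range Sum.inr := by
  rintro s ⟨t, rfl, -⟩
  exact ⟨t, rfl⟩

end NBW

/-- the `(N,C,B)` complement of an FANBW is limit deterministic: its
state set partitions into the initial-phase part `Q^c_N` (the `inl` states) and the
accepting-phase part `Q^c_D` (the `inr` states), all accepting states lie in `Q^c_D`,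
`Q^c_D` is closed under transitions, and every state of `Q^c_D` has at most one
`a`-successor for each letter `a`. -/
theorem ncbComplement_limit_deterministic
    [LinearOrder Q] (M : NBW Q A) :
    (∀ s ∈ (M.ncbComplement).F, ∃ t : Set Q × Set Q × Set Q, s = Sum.inr t) ∧
    (∀ (t : Set Q × Set Q × Set Q) (a : A),
      ∀ s' ∈ (M.ncbComplement).δ (Sum.inr t) a,
        ∃ t' : Set Q × Set Q × Set Q, s' = Sum.inr t') ∧
    (∀ (t : Set Q × Set Q × Set Q) (a : A),
      ((M.ncbComplement).δ (Sum.inr t) a).Subsingleton) := by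
  refine ⟨fun s hs => ?_, fun t a s' hs' => ?_, fun t a => ?_⟩
  · obtain ⟨t, rfl⟩ := M.ncbComplement_F_subset_range_inr hs
    exact ⟨t, rfl⟩
  · rw [NBW.ncbComplement_δ_inr, Set.mem_singleton_iff] at hs'
    exact ⟨_, hs'⟩
  · rw [NBW.ncbComplement_δ_inr]
    exact Set.subsingleton_singleton
end
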